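/- arXiv:1202.5625 — 3 statements merged into one kernel-verified Lean document; each statement's English description precedes it below -/
import Mathlib

section
/- Let v = (v₀,v₁,v₂) ∈ ℝ³ with |v| = 1 and r := √(v₁² + v₂²) > 0, let u := (−r, v₀v₁/r, v₀v₂/r), and set A := √((√5+1)/2), B := √((√5−1)/2). Define zⱼ := A·vⱼ + i·B·uⱼ ∈ ℂ for j = 0,1,2. Then z₀² + z₁² + z₂² = 1, Im(conj(z₁)·z₂) = 0 (equivalently |z₁ + iz₂| = |z₁ − iz₂|, the vanishing-cycle condition), and z₀ = A·v₀ − i·B·r lies on the ellipse {A·cos θ + i·B·sin θ} with A² − B² = 1, i.e. the ellipse with foci ±1. -/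
open Complex

/-!
A unit covector `u` at the unit vector `v` gives the point `z = A v + i B u` of the quadric, since
`∑ zⱼ² = A²|v|² − B²|u|² + 2iAB⟨v,u⟩ = A² − B² = 1`. For `u` pointing along the meridian through
`(1,0,0)`, the vectors `(v₁,v₂)` and `(u₁,u₂)` are parallel, so `z₁` and `z₂` have the same phase
modulo `π`; and `(v₀, −r)` lies on the unit circle, so `z₀ = A v₀ − iBr` lies on the ellipse.
-/

lemma sq_sqrt_half_add_one_sub_sq_sqrt_half_sub_one {c : ℝ} (hc : 1 ≤ c) :
    Real.sqrt ((c + 1) / 2) ^ 2 - Real.sqrt ((c - 1) / 2) ^ 2 = 1 := by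
  rw [Real.sq_sqrt (by linarith), Real.sq_sqrt (by linarith)]
  ring

lemma exists_cos_eq_and_sin_eq {x y : ℝ} (h : x ^ 2 + y ^ 2 = 1) :
    ∃ θ : ℝ, Real.cos θ = x ∧ Real.sin θ = y := by
  have hnorm : ‖(⟨x, y⟩ : ℂ)‖ = 1 := by
    rw [Complex.norm_def, normSq_mk, ← sq, ← sq, h, Real.sqrt_one]
  have hne : (⟨x, y⟩ : ℂ) ≠ 0 := by
    rintro h0
    simp [h0] at hnorm
  exact ⟨arg ⟨x, y⟩, by rw [cos_arg hne, hnorm, div_one], by rw [sin_arg, hnorm, div_one]⟩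

lemma norm_add_I_mul_eq_norm_sub_I_mul_iff (z w : ℂ) :
    ‖z + I * w‖ = ‖z - I * w‖ ↔ ((starRingEnd ℂ) z * w).im = 0 := by
  have hdiff : normSq (z + I * w) - normSq (z - I * w) = -4 * ((starRingEnd ℂ) z * w).im := by
    simp only [normSq_apply, add_re, add_im, sub_re, sub_im, mul_re, mul_im, I_re, I_im,
      conj_re, conj_im]
    ring
  rw [Complex.norm_def, Complex.norm_def,
    Real.sqrt_inj (normSq_nonneg _) (normSq_nonneg _)]
  constructor <;> intro h <;> linarith

section Quadric

variable {A B v₀ v₁ v₂ u₀ u₁ u₂ : ℝ}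

lemma sum_sq_eq_one_of_orthonormal (hAB : A ^ 2 - B ^ 2 = 1)
    (hv : v₀ ^ 2 + v₁ ^ 2 + v₂ ^ 2 = 1) (hu : u₀ ^ 2 + u₁ ^ 2 + u₂ ^ 2 = 1)
    (hvu : v₀ * u₀ + v₁ * u₁ + v₂ * u₂ = 0) :
    (((A * v₀ : ℝ) : ℂ) + I * (B * u₀ : ℝ)) ^ 2 + (((A * v₁ : ℝ) : ℂ) + I * (B * u₁ : ℝ)) ^ 2
      + (((A * v₂ : ℝ) : ℂ) + I * (B * u₂ : ℝ)) ^ 2 = 1 := by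
  apply Complex.ext
  · simp only [sq, add_re, add_im, mul_re, mul_im, ofReal_re, ofReal_im, I_re, I_im, one_re]
    linear_combination A ^ 2 * hv - B ^ 2 * hu + hAB
  · simp only [sq, add_re, add_im, mul_re, mul_im, ofReal_re, ofReal_im, I_re, I_im, one_im]
    linear_combination 2 * A * B * hvu

lemma im_conj_mul_eq_zero_of_parallel (h : v₁ * u₂ = u₁ * v₂) :
    ((starRingEnd ℂ) (((A * v₁ : ℝ) : ℂ) + I * (B * u₁ : ℝ)) *
      (((A * v₂ : ℝ) : ℂ) + I * (B * u₂ : ℝ))).im = 0 := by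
  simp only [mul_im, conj_re, conj_im, add_re, add_im, mul_re, ofReal_re, ofReal_im, I_re, I_im]
  linear_combination A * B * h

end Quadric

section MeridianCovector

variable {v₀ v₁ v₂ r : ℝ}

lemma meridian_covector_norm_sq (hv : v₀ ^ 2 + v₁ ^ 2 + v₂ ^ 2 = 1)
    (hr : r ^ 2 = v₁ ^ 2 + v₂ ^ 2) (hr0 : r ≠ 0) :
    (-r) ^ 2 + (v₀ * v₁ / r) ^ 2 + (v₀ * v₂ / r) ^ 2 = 1 := by
  field_simp
  linear_combination (r ^ 2 - v₀ ^ 2) * hr + r ^ 2 * hv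

lemma meridian_covector_orthogonal (hr : r ^ 2 = v₁ ^ 2 + v₂ ^ 2) (hr0 : r ≠ 0) :
    v₀ * -r + v₁ * (v₀ * v₁ / r) + v₂ * (v₀ * v₂ / r) = 0 := by
  field_simp
  linear_combination -v₀ * hr

end MeridianCovector

/-- Let `v = (v₀,v₁,v₂) ∈ ℝ³` be a unit vector with
`r = √(v₁² + v₂²) > 0`, `u = (−r, v₀v₁/r, v₀v₂/r)`, `A = √((√5+1)/2)`,
`B = √((√5−1)/2)`, and `zⱼ = A·vⱼ + i·B·uⱼ`. Then `z₀² + z₁² + z₂² = 1`,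
`Im(conj(z₁)·z₂) = 0` (equivalently `|z₁ + iz₂| = |z₁ − iz₂|`, the vanishing-cycle
condition), and `z₀ = A·v₀ − i·B·r` lies on the ellipse `{A·cos θ + i·B·sin θ}` with
`A² − B² = 1`, i.e. the ellipse with foci `±1`. -/
theorem polterovich_torus_on_ellipse
    (v₀ v₁ v₂ : ℝ) (hv : v₀ ^ 2 + v₁ ^ 2 + v₂ ^ 2 = 1)
    (r : ℝ) (hr : r = Real.sqrt (v₁ ^ 2 + v₂ ^ 2)) (hrpos : 0 < r)
    (u₀ u₁ u₂ : ℝ) (hu₀ : u₀ = -r) (hu₁ : u₁ = v₀ * v₁ / r) (hu₂ : u₂ = v₀ * v₂ / r)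
    (A B : ℝ) (hA : A = Real.sqrt ((Real.sqrt 5 + 1) / 2))
    (hB : B = Real.sqrt ((Real.sqrt 5 - 1) / 2))
    (z₀ z₁ z₂ : ℂ)
    (hz₀ : z₀ = (A * v₀ : ℝ) + I * (B * u₀ : ℝ))
    (hz₁ : z₁ = (A * v₁ : ℝ) + I * (B * u₁ : ℝ))
    (hz₂ : z₂ = (A * v₂ : ℝ) + I * (B * u₂ : ℝ)) :
    z₀ ^ 2 + z₁ ^ 2 + z₂ ^ 2 = 1 ∧
      ((starRingEnd ℂ) z₁ * z₂).im = 0 ∧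
      ‖z₁ + I * z₂‖ = ‖z₁ - I * z₂‖ ∧
      z₀ = (A * v₀ : ℝ) - I * (B * r : ℝ) ∧
      A ^ 2 - B ^ 2 = 1 ∧
      ∃ θ : ℝ, z₀ = (A * Real.cos θ : ℝ) + I * (B * Real.sin θ : ℝ) := by
  have hAB : A ^ 2 - B ^ 2 = 1 := by
    rw [hA, hB]
    exact sq_sqrt_half_add_one_sub_sq_sqrt_half_sub_one (Real.one_le_sqrt.mpr (by norm_num))
  have hr2 : r ^ 2 = v₁ ^ 2 + v₂ ^ 2 := by rw [hr, Real.sq_sqrt (by positivity)]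
  have hz₀' : z₀ = (A * v₀ : ℝ) - I * (B * r : ℝ) := by
    rw [hz₀, hu₀]
    push_cast
    ring
  have hvanish : ((starRingEnd ℂ) z₁ * z₂).im = 0 := by
    rw [hz₁, hz₂]
    exact im_conj_mul_eq_zero_of_parallel (by rw [hu₁, hu₂]; ring)
  obtain ⟨θ, hcos, hsin⟩ : ∃ θ : ℝ, Real.cos θ = v₀ ∧ Real.sin θ = -r :=
    exists_cos_eq_and_sin_eq (by linear_combination hv + hr2)
  refine ⟨?_, hvanish, (norm_add_I_mul_eq_norm_sub_I_mul_iff z₁ z₂).mpr hvanish, hz₀', hAB,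
    θ, ?_⟩
  · subst hz₀ hz₁ hz₂ hu₀ hu₁ hu₂
    exact sum_sq_eq_one_of_orthonormal hAB hv (meridian_covector_norm_sq hv hr2 hrpos.ne')
      (meridian_covector_orthogonal hr2 hrpos.ne')
  · rw [hz₀', hcos, hsin]
    push_cast
    ring
end

section
/- Let r > 0 and let (x₁,x₂) ∈ ℂ² satisfy |x₁ + ix₂| = |x₁ − ix₂| = √r. Then there exists a unique pair (a,w) with a ∈ ℂ, |a| = 1/2, w ∈ ℂ, |w| = r, such that u_{a,+}(w) = (x₁,x₂), namely a = conj(x₁ + ix₂)/(2√r) and w = √r(x₁ − ix₂)/(2a); and similarly there exists a unique pair (a',w') with |a'| = 1/2, |w'| = r and u_{a',−}(w') = (x₁,x₂). Hence through every point of the torus T_r there pass exactly two of these holomorphic sections, one from each family. -/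
open Complex

/-- The family `u_{a,+}` of holomorphic sections of `π(x₁,x₂) = x₁² + x₂²`. -/
noncomputable def modelSectionPlus (r : ℝ) (a : ℂ) (w : ℂ) : ℂ × ℂ :=
  (a * w / (Real.sqrt r : ℂ) + (Real.sqrt r : ℂ) * (starRingEnd ℂ) a,
    I * (a * w / (Real.sqrt r : ℂ) - (Real.sqrt r : ℂ) * (starRingEnd ℂ) a))

/-- The family `u_{a,−}`. -/
noncomputable def modelSectionMinus (r : ℝ) (a : ℂ) (w : ℂ) : ℂ × ℂ :=
  (a * w / (Real.sqrt r : ℂ) + (Real.sqrt r : ℂ) * (starRingEnd ℂ) a,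
    -I * (a * w / (Real.sqrt r : ℂ) - (Real.sqrt r : ℂ) * (starRingEnd ℂ) a))

open ComplexConjugate

/-! In the coordinates `z± = x₁ ± i x₂` the section `u_{a,+}` reads `w ↦ (2√r·ā, 2aw/√r)`, and
`u_{a,−}` is the same with the two coordinates swapped. Hence a point determines `ā`, then `w`
(as `|z±| = √r` forces `a ≠ 0`), and the same norms give `|a| = 1/2` and `|w| = r`. -/

theorem prod_eq_iff_add_I_mul_and_sub_I_mul {p : ℂ × ℂ} {x₁ x₂ : ℂ} :
    p = (x₁, x₂) ↔ p.1 + I * p.2 = x₁ + I * x₂ ∧ p.1 - I * p.2 = x₁ - I * x₂ := by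
  refine ⟨fun h ↦ by simp [h], fun ⟨hadd, hsub⟩ ↦ Prod.ext ?_ ?_⟩
  · linear_combination (hadd + hsub) / 2
  · linear_combination (-I / 2) * (hadd - hsub) + (p.2 - x₂) * I_sq

theorem modelSectionPlus_eq_iff (r : ℝ) (a w x₁ x₂ : ℂ) :
    modelSectionPlus r a w = (x₁, x₂) ↔
      2 * √r * conj a = x₁ + I * x₂ ∧ 2 * a * w / √r = x₁ - I * x₂ := by
  rw [prod_eq_iff_add_I_mul_and_sub_I_mul, modelSectionPlus]
  congr! 2
  · linear_combination (a * w / √r - √r * conj a) * I_sq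
  · linear_combination (√r * conj a - a * w / √r) * I_sq

theorem modelSectionMinus_eq_iff (r : ℝ) (a w x₁ x₂ : ℂ) :
    modelSectionMinus r a w = (x₁, x₂) ↔
      2 * √r * conj a = x₁ - I * x₂ ∧ 2 * a * w / √r = x₁ + I * x₂ := by
  rw [prod_eq_iff_add_I_mul_and_sub_I_mul, modelSectionMinus, and_comm]
  congr! 2
  · linear_combination (a * w / √r - √r * conj a) * I_sq
  · linear_combination (√r * conj a - a * w / √r) * I_sq

theorem two_mul_conj_eq_and_iff {s : ℝ} (hs : s ≠ 0) {p q : ℂ} (hp : p ≠ 0) {a w : ℂ} :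
    (2 * s * conj a = p ∧ 2 * a * w / s = q) ↔ a = conj p / (2 * s) ∧ w = s * q / (2 * a) := by
  have hs' : (s : ℂ) ≠ 0 := ofReal_ne_zero.mpr hs
  constructor
  · rintro ⟨rfl, rfl⟩
    have ha : a ≠ 0 := by simpa [hs] using hp
    simp only [map_mul, conj_conj, conj_ofReal, map_ofNat]
    constructor <;> field_simp
  · rintro ⟨rfl, rfl⟩
    have hp' : conj p ≠ 0 := (map_ne_zero _).mpr hp
    simp only [map_div₀, map_mul, conj_conj, conj_ofReal, map_ofNat]
    constructor <;> field_simp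

theorem norm_conj_div_two_mul_of_norm_eq {s : ℝ} (hs : 0 < s) {p : ℂ} (hp : ‖p‖ = s) :
    ‖conj p / (2 * s)‖ = 1 / 2 := by
  rw [norm_div, norm_mul, norm_conj, hp, Complex.norm_two, norm_real, Real.norm_of_nonneg hs.le]
  field_simp

theorem norm_mul_div_two_mul_of_norm_eq {s : ℝ} (hs : 0 ≤ s) {q a : ℂ} (hq : ‖q‖ = s)
    (ha : ‖a‖ = 1 / 2) : ‖s * q / (2 * a)‖ = s ^ 2 := by
  rw [norm_div, norm_mul, norm_mul, hq, Complex.norm_two, ha, norm_real, Real.norm_of_nonneg hs]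
  ring

theorem norm_and_two_mul_conj_eq_of_eq {r : ℝ} (hr : 0 < r) {p q : ℂ} (hp : ‖p‖ = √r)
    (hq : ‖q‖ = √r) {a w : ℂ} (ha : a = conj p / (2 * √r)) (hw : w = √r * q / (2 * a)) :
    ‖a‖ = 1 / 2 ∧ ‖w‖ = r ∧ 2 * √r * conj a = p ∧ 2 * a * w / √r = q := by
  have hs := Real.sqrt_pos.mpr hr
  have ha_norm : ‖a‖ = 1 / 2 := ha ▸ norm_conj_div_two_mul_of_norm_eq hs hp
  refine ⟨ha_norm, ?_, ?_⟩
  · rw [hw, norm_mul_div_two_mul_of_norm_eq hs.le hq ha_norm, Real.sq_sqrt hr.le]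
  · exact (two_mul_conj_eq_and_iff hs.ne' (norm_pos_iff.mp (hp ▸ hs))).mpr ⟨ha, hw⟩

theorem existsUnique_norm_and_two_mul_conj_eq {r : ℝ} (hr : 0 < r) {p q : ℂ}
    (hp : ‖p‖ = √r) (hq : ‖q‖ = √r) :
    ∃! aw : ℂ × ℂ, ‖aw.1‖ = 1 / 2 ∧ ‖aw.2‖ = r ∧
      2 * √r * conj aw.1 = p ∧ 2 * aw.1 * aw.2 / √r = q := by
  have hs := Real.sqrt_pos.mpr hr
  set a := conj p / (2 * √r)
  refine ⟨(a, √r * q / (2 * a)), norm_and_two_mul_conj_eq_of_eq hr hp hq rfl rfl, ?_⟩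
  rintro ⟨a', w'⟩ ⟨-, -, h⟩
  obtain ⟨rfl, hw⟩ := (two_mul_conj_eq_and_iff hs.ne' (norm_pos_iff.mp (hp ▸ hs))).mp h
  exact Prod.ext rfl hw

/-- Through every point `(x₁,x₂)` of the matching torus
`T_r = {|x₁ + ix₂| = |x₁ − ix₂| = √r}` there passes a unique section of each family:
there is a unique pair `(a,w)` with `|a| = 1/2`, `|w| = r`, `u_{a,+}(w) = (x₁,x₂)`,
namely `a = conj(x₁ + ix₂)/(2√r)` and `w = √r(x₁ − ix₂)/(2a)`, and likewise a unique
pair `(a',w')` with `u_{a',−}(w') = (x₁,x₂)`. -/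
theorem model_sections_through_point (r : ℝ) (hr : 0 < r) (x₁ x₂ : ℂ)
    (h₁ : ‖x₁ + I * x₂‖ = Real.sqrt r)
    (h₂ : ‖x₁ - I * x₂‖ = Real.sqrt r) :
    (∃! aw : ℂ × ℂ, ‖aw.1‖ = 1 / 2 ∧ ‖aw.2‖ = r ∧
        modelSectionPlus r aw.1 aw.2 = (x₁, x₂)) ∧
    (∀ a w : ℂ,
        a = (starRingEnd ℂ) (x₁ + I * x₂) / (2 * (Real.sqrt r : ℂ)) →
        w = (Real.sqrt r : ℂ) * (x₁ - I * x₂) / (2 * a) →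
        ‖a‖ = 1 / 2 ∧ ‖w‖ = r ∧
          modelSectionPlus r a w = (x₁, x₂)) ∧
    (∃! aw : ℂ × ℂ, ‖aw.1‖ = 1 / 2 ∧ ‖aw.2‖ = r ∧
        modelSectionMinus r aw.1 aw.2 = (x₁, x₂)) := by
  simp only [modelSectionPlus_eq_iff, modelSectionMinus_eq_iff]
  exact ⟨existsUnique_norm_and_two_mul_conj_eq hr h₁ h₂,
    fun _ _ ha hw ↦ norm_and_two_mul_conj_eq_of_eq hr h₁ h₂ ha hw,
    existsUnique_norm_and_two_mul_conj_eq hr h₂ h₁⟩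
end

section
/- Fix an integer m ≥ 1 and for R > 1 define the monotonicity constant τ(R) = πR² + I(R), where I(R) = (π m R^m / 2) · ∫₀¹ (R^m − cos(2πmt)) / √(1 + R^{2m} − 2R^m cos(2πmt)) dt. Then τ(R) tends to π + m as R tends to 1 from above. -/
/-!
The integrand of `I(R)` is bounded by `1` in absolute value for every `R`, and at `R = 1` it
becomes `|sin (π m t)|` by the half-angle formula; it is continuous in `R` at `1` except where
`cos (2π m t) = 1`, a null set. Dominated convergence therefore makes `τ` continuous at `1`, and
`τ(1) = π + (π m / 2) · ∫₀¹ |sin (π m t)| dt = π + m`.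
-/

open Real Filter

/-- The monotonicity constant `τ(R) = πR² + I(R)` of the matching torus of the
`A_{m-1}` Milnor fibre over the circle of radius `R`. -/
noncomputable def monotonicityConstant (m : ℕ) (R : ℝ) : ℝ :=
  π * R ^ 2 + (π * m * R ^ m / 2) *
    ∫ t in (0 : ℝ)..1,
      (R ^ m - Real.cos (2 * π * m * t)) /
        Real.sqrt (1 + R ^ (2 * m) - 2 * R ^ m * Real.cos (2 * π * m * t))

open MeasureTheory

/-- The integrand of `I(R)`, written in `a = R^m` and `c = cos (2π m t)`. -/
noncomputable def areaKernel (a c : ℝ) : ℝ := (a - c) / √(1 + a ^ 2 - 2 * a * c)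

lemma abs_areaKernel_le_one (a : ℝ) {c : ℝ} (hc : |c| ≤ 1) : |areaKernel a c| ≤ 1 := by
  have hsub : |a - c| ≤ √(1 + a ^ 2 - 2 * a * c) := by
    rw [← sqrt_sq_eq_abs]
    exact sqrt_le_sqrt (by nlinarith [sq_le_one_iff_abs_le_one c |>.mpr hc])
  rw [areaKernel, abs_div, abs_of_nonneg (sqrt_nonneg _)]
  exact div_le_one_of_le₀ hsub (sqrt_nonneg _)

lemma areaKernel_one_cos (θ : ℝ) : areaKernel 1 (cos θ) = |sin (θ / 2)| := by
  have hx : 0 ≤ 1 - cos θ := by linarith [cos_le_one θ]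
  rw [abs_sin_half, areaKernel, show 1 + 1 ^ 2 - 2 * 1 * cos θ = 2 * (1 - cos θ) by ring,
    sqrt_mul zero_le_two, sqrt_div hx]
  nth_rewrite 1 [← mul_self_sqrt hx]
  rcases (sqrt_nonneg (1 - cos θ)).eq_or_lt with h | h
  · simp [← h]
  · field_simp

lemma continuousAt_areaKernel_one {c : ℝ} (hc : c < 1) :
    ContinuousAt (fun a => areaKernel a c) 1 := by
  refine ContinuousAt.div (by fun_prop) (by fun_prop) (sqrt_ne_zero'.mpr ?_)
  linarith

lemma ae_cos_mul_ne_one {k : ℝ} (hk : k ≠ 0) : ∀ᵐ t : ℝ, cos (k * t) ≠ 1 := by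
  refine ae_iff.mpr (Set.Countable.measure_zero ?_ _)
  refine (Set.countable_range fun n : ℤ => n * (2 * π) / k).mono fun t ht => ?_
  obtain ⟨n, hn⟩ := (cos_eq_one_iff _).mp (not_not.mp ht)
  exact ⟨n, by simp only [hn, mul_div_cancel_left₀ t hk]⟩

lemma continuousAt_integral_areaKernel_one {k : ℝ} (hk : k ≠ 0) :
    ContinuousAt (fun a => ∫ t in (0 : ℝ)..1, areaKernel a (cos (k * t))) 1 := by
  refine intervalIntegral.continuousAt_of_dominated_interval (bound := fun _ => 1)
    (Eventually.of_forall fun a => ?_) (Eventually.of_forall fun a => ae_of_all _ fun t _ => ?_)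
    intervalIntegrable_const ((ae_cos_mul_ne_one hk).mono fun t ht _ => ?_)
  · have hmeas : Measurable fun t => areaKernel a (cos (k * t)) := by
      unfold areaKernel
      fun_prop
    exact hmeas.aestronglyMeasurable
  · exact abs_areaKernel_le_one a (abs_cos_le_one _)
  · exact continuousAt_areaKernel_one ((cos_le_one _).lt_of_ne ht)

lemma integral_abs_sin_natCast_mul_pi (n : ℕ) : ∫ x in (0 : ℝ)..n * π, |sin x| = 2 * n := by
  have hperiodic : Function.Periodic (fun x => |sin x|) π := fun x => by simp [sin_add_pi]
  have hsin : Set.EqOn (fun x => |sin x|) sin (Set.uIcc 0 π) := fun x hx => by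
    rw [Set.uIcc_of_le pi_pos.le] at hx
    exact abs_of_nonneg (sin_nonneg_of_mem_Icc hx)
  have hhalf : ∫ x in (0 : ℝ)..π, |sin x| = 2 := by
    rw [intervalIntegral.integral_congr hsin, integral_sin]
    norm_num
  have := hperiodic.intervalIntegral_add_zsmul_eq n 0
    fun a b => continuous_sin.abs.intervalIntegrable a b
  simpa [hhalf, mul_comm] using this

lemma integral_abs_sin_pi_mul_natCast_mul {n : ℕ} (hn : n ≠ 0) :
    ∫ t in (0 : ℝ)..1, |sin (π * n * t)| = 2 / π := by
  have hπn : π * n ≠ 0 := by positivity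
  rw [intervalIntegral.integral_comp_mul_left (fun x => |sin x|) hπn, mul_zero, mul_one,
    mul_comm π, integral_abs_sin_natCast_mul_pi, smul_eq_mul]
  field_simp

lemma monotonicityConstant_eq (m : ℕ) (R : ℝ) :
    monotonicityConstant m R = π * R ^ 2 +
      (π * m * R ^ m / 2) * ∫ t in (0 : ℝ)..1, areaKernel (R ^ m) (cos (2 * π * m * t)) := by
  simp only [monotonicityConstant, areaKernel, ← pow_mul, mul_comm m 2]

lemma monotonicityConstant_one {m : ℕ} (hm : m ≠ 0) : monotonicityConstant m 1 = π + m := by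
  simp only [monotonicityConstant_eq, one_pow, areaKernel_one_cos,
    show ∀ t : ℝ, 2 * π * m * t / 2 = π * m * t from fun t => by ring,
    integral_abs_sin_pi_mul_natCast_mul hm]
  field_simp

lemma continuousAt_monotonicityConstant_one {m : ℕ} (hm : m ≠ 0) :
    ContinuousAt (monotonicityConstant m) 1 := by
  have hk : 2 * π * m ≠ 0 := by positivity
  have hint := (continuousAt_integral_areaKernel_one hk).comp_of_eq
    (continuous_pow m).continuousAt (one_pow m)
  rw [funext (monotonicityConstant_eq m)]
  exact (by fun_prop : ContinuousAt (fun R : ℝ => π * R ^ 2) 1).add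
    ((by fun_prop : ContinuousAt (fun R : ℝ => π * m * R ^ m / 2) 1).mul hint)

/-- For `m ≥ 1`, the monotonicity constant `τ(R) = πR² + I(R)`
tends to `π + m` as `R` tends to `1` from above. -/
theorem monotonicityConstant_tendsto (m : ℕ) (hm : 1 ≤ m) :
    Tendsto (monotonicityConstant m) (nhdsWithin 1 (Set.Ioi 1)) (nhds (π + m)) := by
  have hm0 : m ≠ 0 := Nat.one_le_iff_ne_zero.mp hm
  rw [← monotonicityConstant_one hm0]
  exact (continuousAt_monotonicityConstant_one hm0).tendsto.mono_left nhdsWithin_le_nhds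
end
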